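/- If c = 3m, r''(c) = 0, and V has a finite limit at c (where V = −(2 r' A' + r A'')/(2r)), then necessarily r'''(c) = 0 and lim_{ρ→c⁺} V = −(3/2) lim_{ρ→c⁺} A''. -/

import Mathlib

/-!
Near `c` one has `r ~ r'(c) (ρ - c)`, `r'' ~ r'''(c) (ρ - c)` and, by L'Hôpital, `A' ~ L (ρ - c)`.
Hence `V = -(r'/r) A' - A''/2 → -L - L/2`. For `r'''(c)`, compute the limit of
`(r'² A - 1)/(ρ - c)²` twice: by L'Hôpital it is `r'''(c)/r'(c) + r'(c)² L / 2`, while solving the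
field equation for `r'² A - 1 = r (r A'' - 2 A r'')/2` gives `r'(c)² L / 2 - r'''(c)/r'(c)`.
-/

open Filter Topology Set

section Slopes

variable {f f' : ℝ → ℝ} {c l : ℝ}

theorem tendsto_div_sub_nhdsGT_of_hasDerivWithinAt (hf : HasDerivWithinAt f l (Ici c) c)
    (hfc : f c = 0) : Tendsto (fun x => f x / (x - c)) (𝓝[>] c) (𝓝 l) := by
  have h := hasDerivWithinAt_iff_tendsto_slope.1 hf
  rw [Ici_sdiff_left] at h
  refine h.congr fun x => ?_
  simp [slope_def_field, hfc]

theorem tendsto_sub_nhdsGT_zero : Tendsto (fun x => x - c) (𝓝[>] c) (𝓝 0) := by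
  simpa using ((continuous_sub_right c).tendsto c).mono_left nhdsWithin_le_nhds

theorem tendsto_div_sub_nhdsGT_of_hasDerivAt (hff' : ∀ᶠ x in 𝓝[>] c, HasDerivAt f (f' x) x)
    (hf : Tendsto f (𝓝[>] c) (𝓝 0)) (hf' : Tendsto f' (𝓝[>] c) (𝓝 l)) :
    Tendsto (fun x => f x / (x - c)) (𝓝[>] c) (𝓝 l) :=
  HasDerivAt.lhopital_zero_nhdsGT hff'
    (Eventually.of_forall fun x => (hasDerivAt_id x).sub_const c)
    (Eventually.of_forall fun _ => one_ne_zero) hf tendsto_sub_nhdsGT_zero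
    (by simpa using hf')

theorem tendsto_div_sub_sq_nhdsGT_of_hasDerivAt (hff' : ∀ᶠ x in 𝓝[>] c, HasDerivAt f (f' x) x)
    (hf : Tendsto f (𝓝[>] c) (𝓝 0)) (hf' : Tendsto (fun x => f' x / (2 * (x - c))) (𝓝[>] c) (𝓝 l)) :
    Tendsto (fun x => f x / (x - c) ^ 2) (𝓝[>] c) (𝓝 l) := by
  refine HasDerivAt.lhopital_zero_nhdsGT hff'
    (Eventually.of_forall fun x => ?_) ?_ hf (by simpa using tendsto_sub_nhdsGT_zero.pow 2) hf'
  · simpa [mul_comm] using ((hasDerivAt_id x).sub_const c).fun_pow 2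
  · filter_upwards [self_mem_nhdsWithin] with x hx
    have : 0 < x - c := sub_pos.2 hx
    positivity

end Slopes

section FieldEquation

variable {r r' r'' A A' A'' f : ℝ → ℝ} {c a K A₀ L : ℝ}

theorem tendsto_potential_nhdsGT (hr' : Tendsto r' (𝓝[>] c) (𝓝 a)) (ha : a ≠ 0)
    (hr : Tendsto (fun x => r x / (x - c)) (𝓝[>] c) (𝓝 a))
    (hA' : Tendsto (fun x => A' x / (x - c)) (𝓝[>] c) (𝓝 L)) (hA'' : Tendsto A'' (𝓝[>] c) (𝓝 L))
    (hr0 : ∀ᶠ x in 𝓝[>] c, r x ≠ 0) :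
    Tendsto (fun x => -(2 * r' x * A' x + r x * A'' x) / (2 * r x)) (𝓝[>] c)
      (𝓝 (-(3 / 2) * L)) := by
  have h := ((hr'.mul hA').div hr ha).neg.sub (hA''.div_const 2)
  rw [show -(a * L / a) - L / 2 = -(3 / 2) * L by field_simp; ring] at h
  refine h.congr' ?_
  filter_upwards [hr0, self_mem_nhdsWithin] with x hrx hx
  have : x - c ≠ 0 := sub_ne_zero.2 (ne_of_gt hx)
  simp only [Pi.div_apply]
  field_simp
  ring

theorem tendsto_div_sub_sq_of_field_eq (hr : Tendsto (fun x => r x / (x - c)) (𝓝[>] c) (𝓝 a))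
    (hr'' : Tendsto (fun x => r'' x / (x - c)) (𝓝[>] c) (𝓝 K)) (hA : Tendsto A (𝓝[>] c) (𝓝 A₀))
    (hA'' : Tendsto A'' (𝓝[>] c) (𝓝 L)) (hr0 : ∀ᶠ x in 𝓝[>] c, r x ≠ 0)
    (hfield : ∀ᶠ x in 𝓝[>] c, r x * A'' x = 2 * A x * r'' x + 2 * f x / r x) :
    Tendsto (fun x => f x / (x - c) ^ 2) (𝓝[>] c) (𝓝 (a * (a * L - 2 * A₀ * K) / 2)) := by
  refine ((hr.mul ((hr.mul hA'').sub ((hA.const_mul 2).mul hr''))).div_const 2).congr' ?_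
  filter_upwards [hr0, hfield, self_mem_nhdsWithin] with x hrx hx hxc
  have : x - c ≠ 0 := sub_ne_zero.2 (ne_of_gt hxc)
  have hf : f x = r x * (r x * A'' x - 2 * A x * r'' x) / 2 := by
    rw [hx]; field_simp; ring
  rw [hf]
  field_simp

theorem tendsto_sq_mul_sub_one_div_sub_sq (hr'd : ∀ᶠ x in 𝓝[>] c, HasDerivAt r' (r'' x) x)
    (hAd : ∀ᶠ x in 𝓝[>] c, HasDerivAt A (A' x) x) (hr' : Tendsto r' (𝓝[>] c) (𝓝 a))
    (hr'' : Tendsto (fun x => r'' x / (x - c)) (𝓝[>] c) (𝓝 K)) (hA : Tendsto A (𝓝[>] c) (𝓝 A₀))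
    (hA' : Tendsto (fun x => A' x / (x - c)) (𝓝[>] c) (𝓝 L)) (hA₀ : a ^ 2 * A₀ = 1) :
    Tendsto (fun x => (r' x ^ 2 * A x - 1) / (x - c) ^ 2) (𝓝[>] c)
      (𝓝 (a * K * A₀ + a ^ 2 * L / 2)) := by
  refine tendsto_div_sub_sq_nhdsGT_of_hasDerivAt
    (f' := fun x => 2 * r' x * r'' x * A x + r' x ^ 2 * A' x) ?_ ?_ ?_
  · filter_upwards [hr'd, hAd] with x hr'x hAx
    have := ((hr'x.fun_pow 2).mul hAx).sub_const 1
    simpa [mul_comm, mul_left_comm] using this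
  · simpa [hA₀] using ((hr'.pow 2).mul hA).sub_const 1
  · refine (((hr'.mul hr'').mul hA).add ((hr'.pow 2).mul hA' |>.div_const 2)).congr' ?_
    filter_upwards [self_mem_nhdsWithin] with x hx
    have : x - c ≠ 0 := sub_ne_zero.2 (ne_of_gt hx)
    field_simp

end FieldEquation

theorem stmt8_general (c : ℝ)
    (r r' r'' r''' : ℝ → ℝ)
    (hr : ∀ ρ ∈ Set.Ici c, HasDerivWithinAt r (r' ρ) (Set.Ici c) ρ)
    (hr'd : ∀ ρ ∈ Set.Ici c, HasDerivWithinAt r' (r'' ρ) (Set.Ici c) ρ)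
    (hr''d : ∀ ρ ∈ Set.Ici c, HasDerivWithinAt r'' (r''' ρ) (Set.Ici c) ρ)
    (hr'gt : ∀ ρ ∈ Set.Ici c, 1 < r' ρ)
    (hrc : r c = 0) (hr''c : r'' c = 0)
    (hrpos : ∀ ρ ∈ Set.Ioi c, 0 < r ρ)
    (A A' A'' V : ℝ → ℝ)
    (hA : ∀ ρ ∈ Set.Ioi c, HasDerivAt A (A' ρ) ρ)
    (hA' : ∀ ρ ∈ Set.Ioi c, HasDerivAt A' (A'' ρ) ρ)
    (hfield : ∀ ρ ∈ Set.Ioi c,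
      r ρ * A'' ρ = 2 * A ρ * r'' ρ + 2 * (r' ρ ^ 2 * A ρ - 1) / r ρ)
    (hAc : Tendsto A (nhdsWithin c (Set.Ioi c)) (nhds (1 / r' c ^ 2)))
    (hA'c : Tendsto A' (nhdsWithin c (Set.Ioi c)) (nhds 0))
    (hV : ∀ ρ ∈ Set.Ioi c,
      V ρ = -(2 * r' ρ * A' ρ + r ρ * A'' ρ) / (2 * r ρ))
    (L Vc : ℝ)
    (hL : Tendsto A'' (nhdsWithin c (Set.Ioi c)) (nhds L))
    (hVc : Tendsto V (nhdsWithin c (Set.Ioi c)) (nhds Vc)) :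
    r''' c = 0 ∧ Vc = -(3 / 2) * L := by
  have hGT : ∀ᶠ ρ in 𝓝[>] c, ρ ∈ Ioi c := self_mem_nhdsWithin
  have hr0 : ∀ᶠ ρ in 𝓝[>] c, r ρ ≠ 0 := hGT.mono fun ρ hρ => (hrpos ρ hρ).ne'
  have ha : r' c ≠ 0 := (zero_lt_one.trans (hr'gt c self_mem_Ici)).ne'
  have hr'lim : Tendsto r' (𝓝[>] c) (𝓝 (r' c)) :=
    (hr'd c self_mem_Ici).continuousWithinAt.mono Ioi_subset_Ici_self
  have hr'd' : ∀ᶠ ρ in 𝓝[>] c, HasDerivAt r' (r'' ρ) ρ := hGT.mono fun ρ hρ =>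
    (hr'd ρ (Ioi_subset_Ici_self hρ)).hasDerivAt (Ici_mem_nhds hρ)
  have hr_slope := tendsto_div_sub_nhdsGT_of_hasDerivWithinAt (hr c self_mem_Ici) hrc
  have hr''_slope := tendsto_div_sub_nhdsGT_of_hasDerivWithinAt (hr''d c self_mem_Ici) hr''c
  have hA'_slope := tendsto_div_sub_nhdsGT_of_hasDerivAt (hGT.mono hA') hA'c hL
  have hK := tendsto_nhds_unique
    (tendsto_sq_mul_sub_one_div_sub_sq hr'd' (hGT.mono hA) hr'lim hr''_slope hAc hA'_slope
      (by field_simp))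
    (tendsto_div_sub_sq_of_field_eq hr_slope hr''_slope hAc hL hr0 (hGT.mono hfield))
  refine ⟨?_, tendsto_nhds_unique hVc ?_⟩
  · -- `hK` says `r'''(c)/r'(c) = -r'''(c)/r'(c)`
    field_simp at hK
    linarith
  · exact (tendsto_potential_nhdsGT hr'lim ha hr_slope hA'_slope hL hr0).congr'
      (hGT.mono fun ρ hρ => (hV ρ hρ).symm)

/-- If `c = 3m`, `r''(c) = 0`, and `V = −(2 r' A' + r A'')/(2r)` has a finite limit at `c`,
then necessarily `r'''(c) = 0` and `lim V = −(3/2) lim A''`. -/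
theorem stmt8 (c m : ℝ) (hc : 0 < c) (hm : m = c / 3)
    (r r' r'' r''' : ℝ → ℝ)
    (hr : ∀ ρ ∈ Set.Ici c, HasDerivWithinAt r (r' ρ) (Set.Ici c) ρ)
    (hr'd : ∀ ρ ∈ Set.Ici c, HasDerivWithinAt r' (r'' ρ) (Set.Ici c) ρ)
    (hr''d : ∀ ρ ∈ Set.Ici c, HasDerivWithinAt r'' (r''' ρ) (Set.Ici c) ρ)
    (hr''' : ContinuousOn r''' (Set.Ici c))
    (hr'gt : ∀ ρ ∈ Set.Ici c, 1 < r' ρ)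
    (hrc : r c = 0) (hr''c : r'' c = 0)
    (hrpos : ∀ ρ ∈ Set.Ioi c, 0 < r ρ)
    (A A' A'' V : ℝ → ℝ)
    (hA : ∀ ρ ∈ Set.Ioi c, HasDerivAt A (A' ρ) ρ)
    (hA' : ∀ ρ ∈ Set.Ioi c, HasDerivAt A' (A'' ρ) ρ)
    (hfield : ∀ ρ ∈ Set.Ioi c,
      r ρ * A'' ρ = 2 * A ρ * r'' ρ + 2 * (r' ρ ^ 2 * A ρ - 1) / r ρ)
    (hAc : Tendsto A (nhdsWithin c (Set.Ioi c)) (nhds (1 / r' c ^ 2)))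
    (hA'c : Tendsto A' (nhdsWithin c (Set.Ioi c)) (nhds 0))
    (hV : ∀ ρ ∈ Set.Ioi c,
      V ρ = -(2 * r' ρ * A' ρ + r ρ * A'' ρ) / (2 * r ρ))
    (L Vc : ℝ)
    (hL : Tendsto A'' (nhdsWithin c (Set.Ioi c)) (nhds L))
    (hVc : Tendsto V (nhdsWithin c (Set.Ioi c)) (nhds Vc)) :
    r''' c = 0 ∧ Vc = -(3 / 2) * L :=
  stmt8_general c r r' r'' r''' hr hr'd hr''d hr'gt hrc hr''c hrpos A A' A'' V hA hA' hfield hAc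
    hA'c hV L Vc hL hVc
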